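/- The map φ_i(v) = Σ_{x_{-i} ∈ L_{-i}} [(n − s(x_{-i}) − 1)! · k(x_{-i})! / (n + k(x_{-i}) − s(x_{-i}))!] (v(x_{-i}, k_i) − v(x_{-i}, 0_i)) satisfies symmetry: for any permutation σ of N and any k-ary game v, φ_{σ(i)}(σ∘v) = φ_i(v), where (σ∘v)(σ(x)) = v(x). -/
import Mathlib


open Finset
open scoped Classical

/-- The top level `k` of `L_i`. -/
def top (k : ℕ) : Fin (k+1) := ⟨k, by omega⟩

/-- `s(x_{-i})`: number of nonzero components of `x_{-i}`. -/
def sOut {n k : ℕ} (i : Fin n) (x : Fin n → Fin (k+1)) : ℕ :=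
  (univ.filter (fun j : Fin n => j ≠ i ∧ (x j : ℕ) > 0)).card

/-- `k(x_{-i})`: number of components of `x_{-i}` equal to `k`. -/
def kOut {n k : ℕ} (i : Fin n) (x : Fin n → Fin (k+1)) : ℕ :=
  (univ.filter (fun j : Fin n => j ≠ i ∧ (x j : ℕ) = k)).card

/-- The importance index
`φ_i(v) = Σ_{x_{-i}} (n-s-1)! k! / (n+k-s)! (v(x_{-i},k_i) - v(x_{-i},0_i))`,
where `L_{-i}` is identified with `{x ∈ L | x i = 0}`. -/
noncomputable def impIndex {n k : ℕ} (i : Fin n) (v : (Fin n → Fin (k+1)) → ℝ) : ℝ :=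
  ∑ x ∈ univ.filter (fun x : Fin n → Fin (k+1) => x i = 0),
    (((n - sOut i x - 1).factorial * (kOut i x).factorial : ℕ) : ℝ) /
        ((n + kOut i x - sOut i x).factorial : ℝ) *
      (v (Function.update x i (top k)) - v (Function.update x i 0))

lemma sOut_perm {n k : ℕ} (σ : Equiv.Perm (Fin n)) (i : Fin n)
    (x : Fin n → Fin (k+1)) : sOut (σ i) (fun j => x (σ.symm j)) = sOut i x := by
  unfold sOut
  apply Finset.card_bij (fun j _ => σ.symm j)
  · intro a ha
    simp only [mem_filter, mem_univ, true_and] at ha ⊢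
    exact ⟨fun h => ha.1 (by simpa using congrArg σ h), ha.2⟩
  · intro a ha b hb h
    exact σ.symm.injective h
  · intro b hb
    simp only [mem_filter, mem_univ, true_and] at hb ⊢
    exact ⟨σ b, ⟨fun h => hb.1 (σ.injective h), by simpa using hb.2⟩, by simp⟩

lemma kOut_perm {n k : ℕ} (σ : Equiv.Perm (Fin n)) (i : Fin n)
    (x : Fin n → Fin (k+1)) : kOut (σ i) (fun j => x (σ.symm j)) = kOut i x := by
  unfold kOut
  apply Finset.card_bij (fun j _ => σ.symm j)
  · intro a ha
    simp only [mem_filter, mem_univ, true_and] at ha ⊢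
    exact ⟨fun h => ha.1 (by simpa using congrArg σ h), ha.2⟩
  · intro a ha b hb h
    exact σ.symm.injective h
  · intro b hb
    simp only [mem_filter, mem_univ, true_and] at hb ⊢
    exact ⟨σ b, ⟨fun h => hb.1 (σ.injective h), by simpa using hb.2⟩, by simp⟩

lemma update_perm {n k : ℕ} (σ : Equiv.Perm (Fin n)) (i : Fin n)
    (x : Fin n → Fin (k+1)) (a : Fin (k+1)) :
    (fun j => Function.update (fun j' => x (σ.symm j')) (σ i) a (σ j)) =
      Function.update x i a := by
  funext j
  by_cases h : j = i
  · subst h; simp [Function.update]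
  · have h2 : σ j ≠ σ i := fun hh => h (σ.injective hh)
    simp [Function.update, h, h2]

theorem stmt_12 (n k : ℕ) (σ : Equiv.Perm (Fin n)) (i : Fin n)
    (v : (Fin n → Fin (k+1)) → ℝ) (hv : v 0 = 0) :
    impIndex (σ i) (fun y => v (fun j => y (σ j))) = impIndex i v := by
  unfold impIndex
  apply Finset.sum_bij (fun (y : Fin n → Fin (k+1)) _ => fun j => y (σ j))
  · intro y hy
    simp only [mem_filter, mem_univ, true_and] at hy ⊢
    simpa using hy
  · intro a _ b _ h
    funext j
    have := congrFun h (σ.symm j)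
    simpa using this
  · intro x hx
    refine ⟨fun j => x (σ.symm j), ?_, ?_⟩
    · simp only [mem_filter, mem_univ, true_and] at hx ⊢
      simpa using hx
    · funext j; simp
  · intro y hy
    set x := fun j => y (σ j) with hxdef
    have hy' : y = fun j => x (σ.symm j) := by funext j; simp [hxdef]
    rw [hy']
    rw [sOut_perm, kOut_perm]
    simp only []
    rw [update_perm, update_perm]
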